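/- Let G be a C_{4k}-free bipartite graph and M a maximum matching of G. If v is in the support of G, then v is reachable from some M-unsaturated vertex by an M-alternating path of even length. -/

import Mathlib

open scoped Classical

namespace C4kPaper

open SimpleGraph

variable {V : Type*} [Fintype V] [DecidableEq V]

/-- The null space of the adjacency matrix of `G`, as a set of vectors. -/
noncomputable def nullSet (G : SimpleGraph V) : Set (V → ℝ) :=
  {x | Matrix.mulVec (G.adjMatrix ℝ) x = 0}

/-- The null space of the adjacency matrix of `G`, as a submodule of `ℝ^V`. -/
noncomputable def nullModule (G : SimpleGraph V) : Submodule ℝ (V → ℝ) :=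
  LinearMap.ker (G.adjMatrix ℝ).mulVecLin

/-- The nullity of `G`: the dimension of the null space of its adjacency matrix. -/
noncomputable def nullity (G : SimpleGraph V) : ℕ :=
  Module.finrank ℝ (nullModule G)

/-- The rank of the adjacency matrix of `G` over `ℝ`. -/
noncomputable def rk (G : SimpleGraph V) : ℕ :=
  (G.adjMatrix ℝ).rank

/-- The support of `G`: vertices where some null space vector is nonzero. -/
def supp (G : SimpleGraph V) : Set V :=
  {v | ∃ x ∈ nullSet G, x v ≠ 0}

/-- The core of `G`: the neighbors of the support. -/
def core (G : SimpleGraph V) : Set V :=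
  {u | ∃ v ∈ supp G, G.Adj u v}

/-- The N-part of `G`: vertices neither in the support nor in the core. -/
def npart (G : SimpleGraph V) : Set V :=
  (supp G ∪ core G)ᶜ

/-- `G` is bipartite. -/
def IsBipartite (G : SimpleGraph V) : Prop :=
  ∃ s : Set V, ∀ ⦃u v : V⦄, G.Adj u v → (u ∈ s ↔ v ∉ s)

/-- `G` has no cycle whose length is a multiple of 4. -/
def C4kFree (G : SimpleGraph V) : Prop :=
  ∀ (v : V) (c : G.Walk v v), c.IsCycle → ¬ (4 ∣ c.length)

/-- `M` is a maximum matching of `G`. -/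
def IsMaximumMatching (G : SimpleGraph V) (M : G.Subgraph) : Prop :=
  M.IsMatching ∧ ∀ M' : G.Subgraph, M'.IsMatching → M'.edgeSet.ncard ≤ M.edgeSet.ncard

/-- The matching number of `G`. -/
noncomputable def matchNum (G : SimpleGraph V) : ℕ :=
  sSup {n | ∃ M : G.Subgraph, M.IsMatching ∧ M.edgeSet.ncard = n}

/-- `s` is an independent set of `G`. -/
def IsIndep (G : SimpleGraph V) (s : Set V) : Prop :=
  ∀ ⦃u⦄, u ∈ s → ∀ ⦃w⦄, w ∈ s → ¬ G.Adj u w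

/-- `s` is a maximum independent set of `G`. -/
def IsMaxIndep (G : SimpleGraph V) (s : Set V) : Prop :=
  IsIndep G s ∧ ∀ t : Set V, IsIndep G t → t.ncard ≤ s.ncard

/-- The independence number of `G`. -/
noncomputable def indepNum (G : SimpleGraph V) : ℕ :=
  sSup {n | ∃ s : Set V, IsIndep G s ∧ s.ncard = n}

/-- An `(M,x)`-alternating walk `w₀, w₁, …, w_j` (here `w_i = p.getVert i`):
for all `0 ≤ i < ⌊(j-1)/2⌋`, `{w_{2i}, w_{2i+1}} ∈ M` and `x_{w_{2i}} · x_{w_{2i+2}} < 0`. -/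
def MxAltWalk (G : SimpleGraph V) (M : G.Subgraph) (x : V → ℝ) {v u : V}
    (p : G.Walk v u) : Prop :=
  ∀ i : ℕ, i < (p.length - 1) / 2 →
    M.Adj (p.getVert (2 * i)) (p.getVert (2 * i + 1)) ∧
      x (p.getVert (2 * i)) * x (p.getVert (2 * i + 2)) < 0

/-- A maximal `(M,x)`-alternating walk: one not properly contained in a longer
`(M,x)`-alternating walk from the same start. -/
def MaximalMxAltWalk (G : SimpleGraph V) (M : G.Subgraph) (x : V → ℝ) {v u : V}
    (p : G.Walk v u) : Prop :=
  MxAltWalk G M x p ∧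
    ∀ (u' : V) (q : G.Walk v u'), MxAltWalk G M x q → p.support <+: q.support →
      q.length = p.length

/-- An `M`-alternating walk starting with an edge not in `M`:
the `i`-th edge belongs to `M` iff `i` is odd. -/
def MAltWalk (G : SimpleGraph V) (M : G.Subgraph) {v u : V} (p : G.Walk v u) : Prop :=
  ∀ i : ℕ, i < p.length → (M.Adj (p.getVert i) (p.getVert (i + 1)) ↔ Odd i)

/-- Vertices reachable from `v` by an even-length `M`-alternating path. -/
def Re (G : SimpleGraph V) (M : G.Subgraph) (v : V) : Set V :=
  {u | ∃ p : G.Walk v u, p.IsPath ∧ MAltWalk G M p ∧ Even p.length}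

/-- Vertices reachable from `v` by an odd-length `M`-alternating path. -/
def Ro (G : SimpleGraph V) (M : G.Subgraph) (v : V) : Set V :=
  {u | ∃ p : G.Walk v u, p.IsPath ∧ MAltWalk G M p ∧ Odd p.length}


/-! ### Auxiliary machinery for `stmt3` -/

section Aux

variable {G : SimpleGraph V}

/-- Alternating condition on a walk read from the start: the `i`-th edge is in `M`
iff `i` is even. This is the reverse of `MAltWalk`. -/
def RevAlt (M : G.Subgraph) {v u : V} (p : G.Walk v u) : Prop :=
  ∀ i : ℕ, i < p.length → (M.Adj (p.getVert i) (p.getVert (i + 1)) ↔ Even i)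

/-- Vertices reachable from `v` by an even `RevAlt` path. -/
def AS (G : SimpleGraph V) (M : G.Subgraph) (v : V) : Set V :=
  {a | ∃ p : G.Walk v a, p.IsPath ∧ RevAlt M p ∧ Even p.length}

/-- Vertices reachable from `v` by an odd `RevAlt` path. -/
def BS (G : SimpleGraph V) (M : G.Subgraph) (v : V) : Set V :=
  {a | ∃ p : G.Walk v a, p.IsPath ∧ RevAlt M p ∧ Odd p.length}

lemma getVert_append_of_le {u v w : V} (p : G.Walk u v) (q : G.Walk v w)
    {i : ℕ} (hi : i ≤ p.length) : (p.append q).getVert i = p.getVert i := by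
  rw [Walk.getVert_append]
  rcases lt_or_eq_of_le hi with h | h
  · simp [h]
  · subst h
    simp [Walk.getVert_length, Walk.getVert_zero]

lemma getVert_takeUntil {v w u : V} {p : G.Walk v w} (h : u ∈ p.support) {i : ℕ}
    (hi : i ≤ (p.takeUntil u h).length) : (p.takeUntil u h).getVert i = p.getVert i := by
  conv_rhs => rw [← Walk.take_spec p h]
  rw [getVert_append_of_le _ _ hi]

lemma RevAlt.takeUntil {M : G.Subgraph} {v w u : V} {p : G.Walk v w} (hr : RevAlt M p)
    (h : u ∈ p.support) : RevAlt M (p.takeUntil u h) := by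
  intro i hi
  rw [getVert_takeUntil h (le_of_lt hi), getVert_takeUntil h hi]
  exact hr i (lt_of_lt_of_le hi (Walk.length_takeUntil_le p h))

lemma getVert_concat_of_le {u v w : V} (p : G.Walk u v) (h : G.Adj v w) {i : ℕ}
    (hi : i ≤ p.length) : (p.concat h).getVert i = p.getVert i := by
  rw [Walk.concat_eq_append, getVert_append_of_le _ _ hi]

lemma getVert_concat_last {u v w : V} (p : G.Walk u v) (h : G.Adj v w) :
    (p.concat h).getVert (p.length + 1) = w := by
  have := Walk.getVert_length (p.concat h)
  rwa [Walk.length_concat] at this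

lemma RevAlt.concat {M : G.Subgraph} {v a b : V} {p : G.Walk v a} (hr : RevAlt M p)
    (h : G.Adj a b) (he : M.Adj a b ↔ Even p.length) : RevAlt M (p.concat h) := by
  intro i hi
  rw [Walk.length_concat] at hi
  rcases lt_or_eq_of_le (Nat.lt_succ_iff.mp hi) with hlt | heq
  · rw [getVert_concat_of_le _ _ (le_of_lt hlt), getVert_concat_of_le _ _ hlt]
    exact hr i hlt
  · subst heq
    rw [getVert_concat_of_le _ _ le_rfl, Walk.getVert_length, getVert_concat_last]
    exact he

lemma walk_parity {s : Set V} (hs : ∀ ⦃u v : V⦄, G.Adj u v → (u ∈ s ↔ v ∉ s))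
    {u w : V} (p : G.Walk u w) : (u ∈ s ↔ w ∈ s) ↔ Even p.length := by
  induction p with
  | nil => simp
  | @cons u u' w h q ih =>
    have h1 := hs h
    rw [Walk.length_cons, Nat.even_add_one, ← ih]
    by_cases hu : u ∈ s <;> by_cases hu' : u' ∈ s <;> by_cases hw : w ∈ s <;> tauto

lemma isPath_concat {u v w : V} {p : G.Walk u v} (hp : p.IsPath) (h : G.Adj v w)
    (hw : w ∉ p.support) : (p.concat h).IsPath := by
  rw [← Walk.isPath_reverse_iff, Walk.reverse_concat, Walk.cons_isPath_iff,
    Walk.isPath_reverse_iff, Walk.support_reverse]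
  exact ⟨hp, by simpa using hw⟩

lemma mem_AS_of_mem_support {M : G.Subgraph} {s : Set V}
    (hs : ∀ ⦃u v : V⦄, G.Adj u v → (u ∈ s ↔ v ∉ s)) {v a : V} {p : G.Walk v a}
    (hp : p.IsPath) (hr : RevAlt M p) {w : V} (hw : w ∈ p.support)
    (hside : v ∈ s ↔ w ∈ s) : w ∈ AS G M v :=
  ⟨p.takeUntil w hw, hp.takeUntil hw, hr.takeUntil hw,
    (walk_parity hs (p.takeUntil w hw)).mp hside⟩

lemma mem_BS_of_mem_support {M : G.Subgraph} {s : Set V}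
    (hs : ∀ ⦃u v : V⦄, G.Adj u v → (u ∈ s ↔ v ∉ s)) {v a : V} {p : G.Walk v a}
    (hp : p.IsPath) (hr : RevAlt M p) {w : V} (hw : w ∈ p.support)
    (hside : ¬ (v ∈ s ↔ w ∈ s)) : w ∈ BS G M v :=
  ⟨p.takeUntil w hw, hp.takeUntil hw, hr.takeUntil hw, by
    rw [← Nat.not_even_iff_odd]
    exact fun hev => hside ((walk_parity hs (p.takeUntil w hw)).mpr hev)⟩

lemma side_of_AS {M : G.Subgraph} {s : Set V}
    (hs : ∀ ⦃u v : V⦄, G.Adj u v → (u ∈ s ↔ v ∉ s)) {v a : V}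
    (ha : a ∈ AS G M v) : v ∈ s ↔ a ∈ s := by
  obtain ⟨p, -, -, he⟩ := ha
  exact (walk_parity hs p).mpr he

/-- Key step lemma: if `a` is evenly reachable and `a b` is a matching edge, then every
`G`-neighbor of `b` is evenly reachable. -/
lemma step_AS {M : G.Subgraph} (hMm : M.IsMatching) {s : Set V}
    (hs : ∀ ⦃u v : V⦄, G.Adj u v → (u ∈ s ↔ v ∉ s)) {v a b : V}
    (ha : a ∈ AS G M v) (hab : M.Adj a b) {w : V} (hbw : G.Adj b w) : w ∈ AS G M v := by
  have hGab : G.Adj a b := hab.adj_sub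
  have hva : v ∈ s ↔ a ∈ s := side_of_AS hs ha
  have hsab := hs hGab
  have hbside : ¬ (v ∈ s ↔ b ∈ s) := by tauto
  obtain ⟨p, hp, hr, hev⟩ := ha
  have hbB : b ∈ BS G M v := by
    by_cases hmem : b ∈ p.support
    · exact mem_BS_of_mem_support hs hp hr hmem hbside
    · refine ⟨p.concat hGab, isPath_concat hp hGab hmem, hr.concat hGab (iff_of_true hab hev), ?_⟩
      rw [Walk.length_concat]
      exact Even.add_one hev
  obtain ⟨r, hrp, hrr, hodd⟩ := hbB
  by_cases hMbw : M.Adj b w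
  · -- then w = a by uniqueness of the matching partner of b
    have hbv : b ∈ M.verts := M.edge_vert hab.symm
    obtain ⟨w', -, huniq⟩ := hMm hbv
    have h1 : w = w' := huniq w hMbw
    have h2 : a = w' := huniq a hab.symm
    rw [h1, ← h2]
    exact ⟨p, hp, hr, hev⟩
  · have hsbw := hs hbw
    have hwside : v ∈ s ↔ w ∈ s := by tauto
    by_cases hmem : w ∈ r.support
    · exact mem_AS_of_mem_support hs hrp hrr hmem hwside
    · refine ⟨r.concat hbw, isPath_concat hrp hbw hmem, ?_, ?_⟩
      · exact hrr.concat hbw (iff_of_false hMbw (Nat.not_even_iff_odd.mpr hodd))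
      · rw [Walk.length_concat]
        exact hodd.add_one

lemma exists_next {x : V → ℝ} (hx : Matrix.mulVec (G.adjMatrix ℝ) x = 0)
    {b a : V} (hba : G.Adj b a) (hxa : x a ≠ 0) : ∃ w, G.Adj b w ∧ x a * x w < 0 := by
  by_contra hcon
  push_neg at hcon
  have h0 : ∑ w ∈ G.neighborFinset b, x w = 0 := by
    have := congrFun hx b
    rwa [SimpleGraph.adjMatrix_mulVec_apply] at this
  have h1 : ∑ w ∈ G.neighborFinset b, x a * x w = 0 := by
    rw [← Finset.mul_sum, h0, mul_zero]
  have h2 : 0 < ∑ w ∈ G.neighborFinset b, x a * x w := by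
    refine Finset.sum_pos' (fun w hw => hcon w (by rwa [← SimpleGraph.mem_neighborFinset])) ?_
    exact ⟨a, by rwa [SimpleGraph.mem_neighborFinset], mul_self_pos.mpr hxa⟩
  exact absurd h1 h2.ne'

lemma sign_alt {y : ℕ → ℝ} (h : ∀ n, y n * y (n + 1) < 0) (k n : ℕ) :
    ((0 < y n) ↔ (0 < y (n + k))) ↔ Even k := by
  induction k with
  | zero => simp
  | succ k ih =>
    have h1 := h (n + k)
    have h2 : (0 < y (n + k)) ↔ ¬ (0 < y (n + k + 1)) := by
      rcases mul_neg_iff.mp h1 with ⟨hp, hq⟩ | ⟨hp, hq⟩ <;>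
        constructor <;> intro <;> first | linarith | tauto
    rw [Nat.even_add_one, ← ih, ← Nat.add_assoc]
    tauto

/-- The walk `b 0, a 1, b 1, a 2, …, a (t+1)` along the alternating chain. -/
def chainW (G : SimpleGraph V) (a b : ℕ → V) (hab : ∀ k, G.Adj (a k) (b k))
    (hba : ∀ k, G.Adj (b k) (a (k + 1))) : (t : ℕ) → G.Walk (b 0) (a (t + 1))
  | 0 => Walk.cons (hba 0) Walk.nil
  | t + 1 => ((chainW G a b hab hba t).concat (hab (t + 1))).concat (hba (t + 1))

variable {a b : ℕ → V} {hab : ∀ k, G.Adj (a k) (b k)} {hba : ∀ k, G.Adj (b k) (a (k + 1))}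

lemma chainW_length (t : ℕ) : (chainW G a b hab hba t).length = 2 * t + 1 := by
  induction t with
  | zero => rfl
  | succ t ih => simp [chainW, Walk.length_concat, ih]; ring

lemma chainW_support (t : ℕ) (w : V) :
    w ∈ (chainW G a b hab hba t).support ↔
      (∃ k, k ≤ t ∧ w = b k) ∨ (∃ k, 1 ≤ k ∧ k ≤ t + 1 ∧ w = a k) := by
  induction t with
  | zero =>
    simp only [chainW, Walk.support_cons, Walk.support_nil, List.mem_cons,
      List.mem_singleton, List.not_mem_nil, or_false]
    constructor
    · rintro (rfl | rfl)
      · exact Or.inl ⟨0, le_rfl, rfl⟩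
      · exact Or.inr ⟨1, le_rfl, le_rfl, rfl⟩
    · rintro (⟨k, hk, rfl⟩ | ⟨k, hk1, hk2, rfl⟩)
      · obtain rfl : k = 0 := by omega
        exact Or.inl rfl
      · obtain rfl : k = 1 := by omega
        exact Or.inr rfl
  | succ t ih =>
    simp only [chainW, Walk.support_concat, List.concat_eq_append, List.mem_append,
      List.mem_singleton, ih]
    constructor
    · rintro (((⟨k, hk, rfl⟩ | ⟨k, hk1, hk2, rfl⟩) | rfl) | rfl)
      · exact Or.inl ⟨k, by omega, rfl⟩
      · exact Or.inr ⟨k, hk1, by omega, rfl⟩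
      · exact Or.inl ⟨t + 1, le_rfl, rfl⟩
      · exact Or.inr ⟨t + 2, by omega, le_rfl, rfl⟩
    · rintro (⟨k, hk, rfl⟩ | ⟨k, hk1, hk2, rfl⟩)
      · rcases Nat.lt_or_ge k (t + 1) with h | h
        · exact Or.inl (Or.inl (Or.inl ⟨k, by omega, rfl⟩))
        · have : k = t + 1 := by omega
          subst this
          exact Or.inl (Or.inr rfl)
      · rcases Nat.lt_or_ge k (t + 2) with h | h
        · exact Or.inl (Or.inl (Or.inr ⟨k, hk1, by omega, rfl⟩))
        · have : k = t + 2 := by omega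
          subst this
          exact Or.inr rfl

lemma chainW_edges (t : ℕ) (e : Sym2 V) :
    e ∈ (chainW G a b hab hba t).edges ↔
      (∃ k, k ≤ t ∧ e = s(b k, a (k + 1))) ∨ (∃ k, 1 ≤ k ∧ k ≤ t ∧ e = s(a k, b k)) := by
  induction t with
  | zero =>
    simp only [chainW, Walk.edges_cons, Walk.edges_nil, List.mem_singleton]
    constructor
    · rintro rfl
      exact Or.inl ⟨0, le_rfl, rfl⟩
    · rintro (⟨k, hk, rfl⟩ | ⟨k, hk1, hk2, rfl⟩)
      · obtain rfl : k = 0 := by omega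
        rfl
      · omega
  | succ t ih =>
    simp only [chainW, Walk.edges_concat, List.concat_eq_append, List.mem_append,
      List.mem_singleton, ih]
    constructor
    · rintro (((⟨k, hk, rfl⟩ | ⟨k, hk1, hk2, rfl⟩) | rfl) | rfl)
      · exact Or.inl ⟨k, by omega, rfl⟩
      · exact Or.inr ⟨k, hk1, by omega, rfl⟩
      · exact Or.inr ⟨t + 1, by omega, le_rfl, rfl⟩
      · exact Or.inl ⟨t + 1, le_rfl, rfl⟩
    · rintro (⟨k, hk, rfl⟩ | ⟨k, hk1, hk2, rfl⟩)
      · rcases Nat.lt_or_ge k (t + 1) with h | h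
        · exact Or.inl (Or.inl (Or.inl ⟨k, by omega, rfl⟩))
        · have : k = t + 1 := by omega
          subst this
          exact Or.inr rfl
      · rcases Nat.lt_or_ge k (t + 1) with h | h
        · exact Or.inl (Or.inl (Or.inr ⟨k, hk1, by omega, rfl⟩))
        · have : k = t + 1 := by omega
          subst this
          exact Or.inl (Or.inr rfl)

lemma chainW_isPath {d : ℕ}
    (hA : ∀ k l, 1 ≤ k → k ≤ d → 1 ≤ l → l ≤ d → a k = a l → k = l)
    (hB : ∀ k l, k < d → l < d → b k = b l → k = l)
    (hAB : ∀ k l, a k ≠ b l) :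
    ∀ t, t + 1 ≤ d → (chainW G a b hab hba t).IsPath := by
  intro t
  induction t with
  | zero =>
    intro _
    simp only [chainW]
    rw [Walk.cons_isPath_iff]
    refine ⟨Walk.IsPath.nil, ?_⟩
    simp only [Walk.support_nil, List.mem_singleton]
    exact fun h => hAB 1 0 h.symm
  | succ t ih =>
    intro hd
    have hpath := ih (by omega)
    have hb1 : b (t + 1) ∉ (chainW G a b hab hba t).support := by
      rw [chainW_support]
      rintro (⟨k, hk, hkb⟩ | ⟨k, hk1, hk2, hka⟩)
      · have := hB (t + 1) k (by omega) (by omega) hkb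
        omega
      · exact hAB k (t + 1) hka.symm
    have hstep1 := isPath_concat hpath (hab (t + 1)) hb1
    refine isPath_concat hstep1 (hba (t + 1)) ?_
    rw [Walk.support_concat, List.mem_append, List.mem_singleton]
    rintro (hmem | heq)
    · rw [chainW_support] at hmem
      rcases hmem with ⟨k, hk, hkb⟩ | ⟨k, hk1, hk2, hka⟩
      · exact hAB (t + 2) k hkb
      · have := hA (t + 2) k (by omega) (by omega) hk1 (by omega) hka
        omega
    · exact hAB (t + 2) (t + 1) heq

end Aux

section Aux2

variable {G : SimpleGraph V}

lemma mem_Re_of_AS {M : G.Subgraph} {v a : V} (p : G.Walk v a) (hp : p.IsPath)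
    (hr : RevAlt M p) (hev : Even p.length) : v ∈ Re G M a := by
  refine ⟨p.reverse, hp.reverse, ?_, by simpa using hev⟩
  intro i hi
  rw [Walk.length_reverse] at hi
  rw [Walk.getVert_reverse, Walk.getVert_reverse]
  have hle : i + 1 ≤ p.length := hi
  have h2 : p.length - i = (p.length - (i + 1)) + 1 := by omega
  rw [h2]
  have hj : p.length - (i + 1) < p.length := by omega
  have h3 := hr (p.length - (i + 1)) hj
  rw [SimpleGraph.Subgraph.adj_comm] at h3
  rw [h3]
  rw [Nat.even_sub hle, ← Nat.not_even_iff_odd, Nat.even_add_one]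
  tauto

end Aux2


/-- every support vertex is reachable from some `M`-unsaturated vertex
by an even-length `M`-alternating path. -/
theorem stmt3 (G : SimpleGraph V) (hb : IsBipartite G) (hc : C4kFree G)
    (M : G.Subgraph) (hM : IsMaximumMatching G M) (v : V) (hv : v ∈ supp G) :
    ∃ u : V, u ∉ M.verts ∧ v ∈ Re G M u := by
  classical
  obtain ⟨s, hs⟩ := hb
  obtain ⟨x, hx, hxv⟩ := hv
  have hxnull : Matrix.mulVec (G.adjMatrix ℝ) x = 0 := hx
  by_contra hcon
  push_neg at hcon
  have hMm : M.IsMatching := hM.1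
  -- every evenly reachable vertex is saturated (else we are done)
  have Hsat : ∀ a, a ∈ AS G M v → a ∈ M.verts := by
    intro a ha
    by_contra hns
    obtain ⟨p, hp, hr, he⟩ := ha
    exact (hcon a hns) (mem_Re_of_AS p hp hr he)
  have hvA : v ∈ AS G M v :=
    ⟨Walk.nil, Walk.IsPath.nil, fun i hi => by simp at hi, by simp⟩
  -- the alternating sign walk
  have hstep : ∀ a : {a : V // a ∈ AS G M v ∧ x a ≠ 0},
      ∃ (a' : {a : V // a ∈ AS G M v ∧ x a ≠ 0}) (bb : V),
        M.Adj ↑a bb ∧ G.Adj bb ↑a' ∧ x ↑a * x ↑a' < 0 := by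
    rintro ⟨a, haA, hxa⟩
    obtain ⟨bb, hbb, -⟩ := hMm (Hsat a haA)
    have hGab : G.Adj a bb := hbb.adj_sub
    obtain ⟨w, hbw, hxw⟩ := exists_next hxnull hGab.symm hxa
    have hwA : w ∈ AS G M v := step_AS hMm hs haA hbb hbw
    have hxw0 : x w ≠ 0 := by
      intro h
      rw [h, mul_zero] at hxw
      exact lt_irrefl 0 hxw
    exact ⟨⟨w, hwA, hxw0⟩, bb, hbb, hbw, hxw⟩
  choose g bf hg1 hg2 hg3 using hstep
  set f : ℕ → {a : V // a ∈ AS G M v ∧ x a ≠ 0} :=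
    fun n => g^[n] ⟨v, hvA, hxv⟩ with hfdef
  have hf : ∀ n, f (n + 1) = g (f n) := fun n => Function.iterate_succ_apply' g n _
  -- pigeonhole: a repeated vertex
  have hjex : ∃ j, ∃ i, i < j ∧ f i = f j := by
    obtain ⟨m, n, hne, hmn⟩ := Finite.exists_ne_map_eq_of_infinite f
    rcases lt_or_gt_of_ne hne with h | h
    · exact ⟨n, m, h, hmn⟩
    · exact ⟨m, n, h, hmn.symm⟩
  set j₀ := Nat.find hjex with hj₀def
  obtain ⟨i₀, hi₀j, hfij⟩ := Nat.find_spec hjex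
  have hmin : ∀ m, m < j₀ → ¬ ∃ i, i < m ∧ f i = f m := fun m hm => Nat.find_min hjex hm
  have hinj : ∀ k l, k < l → l < j₀ → f k ≠ f l := by
    intro k l hkl hl hfe
    exact hmin l hl ⟨k, hkl, hfe⟩
  set d := j₀ - i₀ with hddef
  have hij : i₀ + d = j₀ := by omega
  -- parity of d from sign alternation
  have hsigns : ∀ n, x ↑(f n) * x ↑(f (n + 1)) < 0 := by
    intro n
    rw [hf n]
    exact hg3 (f n)
  have hdeven : Even d := by
    have := sign_alt hsigns d i₀
    rw [hij, hfij] at this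
    exact this.mp Iff.rfl
  have hd2 : 2 ≤ d := by
    rcases hdeven with ⟨m, hm⟩
    have hd0 : d ≠ 0 := by omega
    omega
  -- the chain
  set a : ℕ → V := fun k => ↑(f (i₀ + k)) with hadef
  set b : ℕ → V := fun k => bf (f (i₀ + k)) with hbdef
  have hMab : ∀ k, M.Adj (a k) (b k) := fun k => hg1 (f (i₀ + k))
  have hab : ∀ k, G.Adj (a k) (b k) := fun k => (hMab k).adj_sub
  have hba : ∀ k, G.Adj (b k) (a (k + 1)) := by
    intro k
    have h1 := hg2 (f (i₀ + k))
    have h2 : f (i₀ + (k + 1)) = g (f (i₀ + k)) := by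
      rw [show i₀ + (k + 1) = (i₀ + k) + 1 by omega, hf]
    show G.Adj (bf (f (i₀ + k))) ↑(f (i₀ + (k + 1)))
    rw [h2]
    exact h1
  have haAS : ∀ k, a k ∈ AS G M v := fun k => (f (i₀ + k)).2.1
  -- injectivity facts
  have hA : ∀ k l, 1 ≤ k → k ≤ d → 1 ≤ l → l ≤ d → a k = a l → k = l := by
    intro k l hk1 hkd hl1 hld he
    have hfe : f (i₀ + k) = f (i₀ + l) := Subtype.coe_injective he
    rcases Nat.lt_or_ge k d with hk | hk
    · rcases Nat.lt_or_ge l d with hl | hl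
      · by_contra hne
        rcases Nat.lt_or_ge k l with h | h
        · exact hinj (i₀ + k) (i₀ + l) (by omega) (by omega) hfe
        · exact hinj (i₀ + l) (i₀ + k) (by omega) (by omega) hfe.symm
      · -- l = d, k < d : f (i₀+k) = f j₀ = f i₀
        have hld' : l = d := by omega
        subst hld'
        rw [show i₀ + d = j₀ from hij, ← hfij] at hfe
        rcases Nat.eq_zero_or_pos k with h | h
        · omega
        · exact absurd hfe.symm (hinj i₀ (i₀ + k) (by omega) (by omega))
    · rcases Nat.lt_or_ge l d with hl | hl
      · have hkd' : k = d := by omega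
        subst hkd'
        rw [show i₀ + d = j₀ from hij, ← hfij] at hfe
        exact absurd hfe (hinj i₀ (i₀ + l) (by omega) (by omega))
      · omega
  have hB : ∀ k l, k < d → l < d → b k = b l → k = l := by
    intro k l hk hl he
    -- the matching partner of b k is unique
    have h1 : M.Adj (b k) (a k) := (hMab k).symm
    have h2 : M.Adj (b k) (a l) := by rw [he]; exact (hMab l).symm
    have hbv : (b k) ∈ M.verts := M.edge_vert h1
    obtain ⟨w', -, huniq⟩ := hMm hbv
    have hakal : a k = a l := (huniq _ h1).trans (huniq _ h2).symm
    have hfe : f (i₀ + k) = f (i₀ + l) := Subtype.coe_injective hakal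
    by_contra hne
    rcases Nat.lt_or_ge k l with h | h
    · exact hinj (i₀ + k) (i₀ + l) (by omega) (by omega) hfe
    · exact hinj (i₀ + l) (i₀ + k) (by omega) (by omega) hfe.symm
  have hAB : ∀ k l, a k ≠ b l := by
    intro k l he
    have h1 : v ∈ s ↔ a k ∈ s := side_of_AS hs (haAS k)
    have h2 : v ∈ s ↔ a l ∈ s := side_of_AS hs (haAS l)
    have h3 := hs (hab l)
    rw [he] at h1
    tauto
  -- build the cycle
  have ha_eq : ∀ k, a k = ↑(f (i₀ + k)) := fun k => by rw [hadef]
  have h_ad : a d = a 0 := by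
    rw [ha_eq, ha_eq, hij]
    rw [show i₀ + 0 = i₀ by omega, ← hfij]
  have hd1 : (d - 1) + 1 = d := by omega
  let Q0 : G.Walk (b 0) (a ((d - 1) + 1)) := chainW G a b hab hba (d - 1)
  let Q : G.Walk (b 0) (a 0) := Q0.copy rfl (by rw [hd1, h_ad])
  let cyc : G.Walk (a 0) (a 0) := Walk.cons (hab 0) Q
  have hQpath : Q.IsPath := by
    rw [Walk.isPath_copy]
    exact chainW_isPath hA hB hAB (d - 1) (by omega)
  have hedge : s(a 0, b 0) ∉ Q.edges := by
    rw [Walk.edges_copy, chainW_edges]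
    rintro (⟨k, hk, he⟩ | ⟨k, hk1, hk2, he⟩)
    · rcases Sym2.eq_iff.mp he with ⟨h1, h2⟩ | ⟨h1, h2⟩
      · exact hAB 0 k h1
      · -- a 0 = a (k+1), b 0 = b k
        rw [← h_ad] at h1
        have hk1d : d = k + 1 := hA d (k + 1) (by omega) le_rfl (by omega) (by omega) h1
        have h0k : (0 : ℕ) = k := hB 0 k (by omega) (by omega) h2
        omega
    · rcases Sym2.eq_iff.mp he with ⟨h1, h2⟩ | ⟨h1, h2⟩
      · rw [← h_ad] at h1
        have hdk : d = k := hA d k (by omega) le_rfl hk1 (by omega) h1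
        omega
      · exact hAB k 0 h2.symm
  have hcyc : cyc.IsCycle := (Walk.cons_isCycle_iff Q (hab 0)).mpr ⟨hQpath, hedge⟩
  have hlen : cyc.length = 2 * d := by
    have h1 : cyc.length = Q.length + 1 := Walk.length_cons _ _
    have h2 : Q.length = Q0.length := Walk.length_copy _ _ _
    have h3 : Q0.length = 2 * (d - 1) + 1 := chainW_length (d - 1)
    omega
  have hdvd : 4 ∣ cyc.length := by
    rw [hlen]
    rcases hdeven with ⟨m, hm⟩
    exact ⟨m, by omega⟩
  exact hc (a 0) cyc hcyc hdvd


end C4kPaper
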